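/- Let k ≥ 1 be an integer and let G be an edge-colored graph containing no cycle of length 4, with average color degree d̂(G) ≥ 2k. Then G contains a rainbow matching of size k. -/

import Mathlib

/-- The color degree of a vertex `v`: the number of distinct colors appearing
on edges of `G` incident to `v`. -/
noncomputable def colorDegree {V : Type*} (G : SimpleGraph V) (c : Sym2 V → ℕ) (v : V) : ℕ :=
  (c '' {e : Sym2 V | e ∈ G.edgeSet ∧ v ∈ e}).ncard

/-- `M` is a rainbow matching in the edge-colored graph `(G, c)`:
a set of edges of `G`, pairwise vertex-disjoint, with pairwise distinct colors. -/
def IsRainbowMatching {V : Type*} (G : SimpleGraph V) (c : Sym2 V → ℕ)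
    (M : Finset (Sym2 V)) : Prop :=
  ↑M ⊆ G.edgeSet ∧
  (∀ e ∈ M, ∀ f ∈ M, e ≠ f → ∀ v : V, v ∈ e → v ∉ f) ∧
  Set.InjOn c ↑M

/-!
Induction on `k`. In a `C₄`-free graph two vertices have at most one common neighbor, so
`∑ d(v)² ≤ n² + ∑ d(v)`; averaging `d(x) + d(y)` over the edges then gives an edge `xy` with
`2 (d(x) + d(y)) + 2 ≤ n + 4k`. Deleting `x`, `y` and every edge of color `c(xy)` costs at most
`d(x) + d(y)` color degree at `x` and `y`, and at most `[u ~ x] + [u ~ y] + 1` at any other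
vertex `u`, so the remaining graph on `n - 2` vertices still has average color degree at least
`2 (k - 1)`. A rainbow matching of size `k - 1` there extends by `xy`.
-/

open Finset SimpleGraph

def NoFourCycle {V : Type*} (G : SimpleGraph V) : Prop :=
  ¬ ∃ a b d e : V, a ≠ b ∧ a ≠ d ∧ a ≠ e ∧ b ≠ d ∧ b ≠ e ∧ d ≠ e ∧
    G.Adj a b ∧ G.Adj b d ∧ G.Adj d e ∧ G.Adj e a

namespace NoFourCycle

variable {V W : Type*} {G : SimpleGraph V}

theorem of_hom {H : SimpleGraph W} (f : H →g G) (hf : Function.Injective f)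
    (hG : NoFourCycle G) : NoFourCycle H := by
  rintro ⟨a, b, d, e, hab, had, hae, hbd, hbe, hde, h₁, h₂, h₃, h₄⟩
  exact hG ⟨f a, f b, f d, f e, hf.ne hab, hf.ne had, hf.ne hae, hf.ne hbd, hf.ne hbe,
    hf.ne hde, f.map_adj h₁, f.map_adj h₂, f.map_adj h₃, f.map_adj h₄⟩

variable [Fintype V] [DecidableRel G.Adj]

theorem pairwiseDisjoint_offDiag_neighborFinset (hG : NoFourCycle G) :
    (Set.univ : Set V).PairwiseDisjoint fun v ↦ (G.neighborFinset v).offDiag := by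
  intro v _ w _ hvw
  simp only [Function.onFun, Finset.disjoint_left, Prod.forall, mem_offDiag, mem_neighborFinset]
  rintro p q ⟨hvp, hvq, hpq⟩ ⟨hwp, hwq, -⟩
  exact hG ⟨p, v, q, w, hvp.ne.symm, hpq, hwp.ne.symm, hvq.ne, hvw, hwq.ne.symm,
    hvp.symm, hvq, hwq.symm, hwp⟩

theorem sum_degree_sq_le [DecidableEq V] (hG : NoFourCycle G) :
    ∑ v, G.degree v ^ 2 ≤ Fintype.card V ^ 2 + ∑ v, G.degree v := by
  have hpairs : ∑ v, #(G.neighborFinset v).offDiag ≤ Fintype.card V ^ 2 := by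
    rw [← card_biUnion (by simpa using hG.pairwiseDisjoint_offDiag_neighborFinset)]
    calc #(univ.biUnion fun v ↦ (G.neighborFinset v).offDiag)
        ≤ #(univ ×ˢ univ : Finset (V × V)) := card_le_card fun p _ ↦ by simp
      _ = Fintype.card V ^ 2 := by simp [sq]
  have hsq (v : V) : G.degree v ^ 2 = #(G.neighborFinset v).offDiag + G.degree v := by
    rw [offDiag_card, G.card_neighborFinset_eq_degree, sq, Nat.sub_add_cancel (Nat.le_mul_self _)]
  simp only [hsq, sum_add_distrib]
  omega

end NoFourCycle

namespace SimpleGraph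

variable {V : Type*} [Fintype V] (G : SimpleGraph V) [DecidableRel G.Adj]

theorem sum_sum_neighborFinset {M : Type*} [AddCommMonoid M] (f : V → M) :
    ∑ v, ∑ u ∈ G.neighborFinset v, f u = ∑ u, G.degree u • f u := by
  rw [sum_comm' (t' := univ) (s' := fun u ↦ G.neighborFinset u) (by simp [adj_comm])]
  simp [← card_neighborFinset_eq_degree]

theorem sum_card_neighborFinset_inter [DecidableEq V] (s : Finset V) :
    ∑ v, #(G.neighborFinset v ∩ s) = ∑ w ∈ s, G.degree w := by
  simp_rw [← filter_mem_eq_inter, card_filter, sum_sum_neighborFinset, smul_eq_mul, mul_ite,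
    mul_one, mul_zero, sum_ite_mem, univ_inter]

theorem sum_degree_le_card_mul : ∑ v, G.degree v ≤ Fintype.card V * (Fintype.card V - 1) := by
  calc ∑ v, G.degree v ≤ ∑ _v : V, (Fintype.card V - 1) :=
        sum_le_sum fun v _ ↦ Nat.le_sub_one_of_lt (G.degree_lt_card_verts v)
    _ = _ := by simp

end SimpleGraph

theorem NoFourCycle.exists_adj_two_mul_degree_add_le {V : Type*} [Fintype V] [DecidableEq V]
    {G : SimpleGraph V} [DecidableRel G.Adj] (hG : NoFourCycle G) {K : ℕ} (hK : 2 ≤ K)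
    (hn : 0 < Fintype.card V) (hD : 2 * K * Fintype.card V ≤ ∑ v, G.degree v) :
    ∃ x y, G.Adj x y ∧ 2 * (G.degree x + G.degree y) + 2 ≤ Fintype.card V + 4 * K := by
  by_contra! h
  have hsq := hG.sum_degree_sq_le
  set n := Fintype.card V
  set D := ∑ v, G.degree v
  have hdarts : (n + 4 * K) * D ≤ 4 * ∑ v, G.degree v ^ 2 + D :=
    calc (n + 4 * K) * D = ∑ v, ∑ _u ∈ G.neighborFinset v, (n + 4 * K) := by
          simp [D, mul_sum, mul_comm]
      _ ≤ ∑ v, ∑ u ∈ G.neighborFinset v, (2 * (G.degree v + G.degree u) + 1) :=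
          sum_le_sum fun v _ ↦ sum_le_sum fun u hu ↦ by
            have := h v u ((G.mem_neighborFinset v u).1 hu); omega
      _ = 4 * ∑ v, G.degree v ^ 2 + D := by
          simp only [D, sum_add_distrib, mul_add, ← mul_sum, G.sum_sum_neighborFinset, sum_const,
            card_neighborFinset_eq_degree, smul_eq_mul, sq, mul_one]
          ring
  have hD4 : 4 * n ≤ D := le_trans (by nlinarith) hD
  have h8 : (n + 8) * D ≤ (n + 4 * K) * D := Nat.mul_le_mul_right D (by omega)
  nlinarith

section ColorDegree

variable {V : Type*} [Fintype V] (G : SimpleGraph V) [DecidableRel G.Adj] (c : Sym2 V → ℕ)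

theorem colorDegree_eq_card_image (v : V) :
    colorDegree G c v = #((G.neighborFinset v).image fun w ↦ c s(v, w)) := by
  have hpalette : c '' {e | e ∈ G.edgeSet ∧ v ∈ e} = (fun w ↦ c s(v, w)) '' G.neighborSet v := by
    ext b
    constructor
    · rintro ⟨e, ⟨he, hve⟩, rfl⟩
      obtain ⟨w, rfl⟩ := Sym2.mem_iff_exists.1 hve
      exact ⟨w, he, rfl⟩
    · rintro ⟨w, hw, rfl⟩
      exact ⟨s(v, w), ⟨hw, Sym2.mem_mk_left v w⟩, rfl⟩
  rw [colorDegree, hpalette, ← Set.ncard_coe_finset, coe_image, coe_neighborFinset]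

theorem colorDegree_le_degree (v : V) : colorDegree G c v ≤ G.degree v := by
  rw [colorDegree_eq_card_image, ← card_neighborFinset_eq_degree]
  exact card_image_le

end ColorDegree

namespace SimpleGraph

variable {V : Type*} (G : SimpleGraph V) (c : Sym2 V → ℕ)

def deleteVertsAndColor (s : Finset V) (a : ℕ) : SimpleGraph {v // v ∉ s} :=
  (G.deleteEdges (c ⁻¹' {a})).comap Subtype.val

variable {G c}

@[simp]
theorem deleteVertsAndColor_adj {s : Finset V} {a : ℕ} {u w : {v // v ∉ s}} :
    (G.deleteVertsAndColor c s a).Adj u w ↔ G.Adj u w ∧ c s(↑u, ↑w) ≠ a := by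
  simp [deleteVertsAndColor]

def deleteVertsAndColorHom (s : Finset V) (a : ℕ) : G.deleteVertsAndColor c s a →g G where
  toFun := Subtype.val
  map_rel' h := (deleteVertsAndColor_adj.1 h).1

end SimpleGraph

section Deletion

variable {V : Type*} [Fintype V] [DecidableEq V] {G : SimpleGraph V} [DecidableRel G.Adj]
  {c : Sym2 V → ℕ}

theorem colorDegree_le_colorDegree_deleteVertsAndColor (s : Finset V) (a : ℕ) (u : {v // v ∉ s}) :
    colorDegree G c u ≤
      colorDegree (G.deleteVertsAndColor c s a) (c ∘ Sym2.map Subtype.val) u +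
        #(G.neighborFinset u ∩ s) + 1 := by
  classical
  set G' := G.deleteVertsAndColor c s a
  rw [colorDegree_eq_card_image, colorDegree_eq_card_image G']
  have hpalette : (G.neighborFinset u).image (fun w ↦ c s(↑u, w)) ⊆
      (G'.neighborFinset u).image (fun w ↦ (c ∘ Sym2.map Subtype.val) s(u, w)) ∪
        (G.neighborFinset u ∩ s).image (fun w ↦ c s(↑u, w)) ∪ {a} := by
    intro b hb
    obtain ⟨w, hw, rfl⟩ := mem_image.1 hb
    rw [mem_neighborFinset] at hw
    by_cases hws : w ∈ s
    · exact mem_union_left _ <| mem_union_right _ <|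
        mem_image_of_mem _ (mem_inter.2 ⟨(G.mem_neighborFinset _ _).2 hw, hws⟩)
    by_cases hwa : c s(↑u, w) = a
    · simp [hwa]
    refine mem_union_left _ (mem_union_left _ (mem_image.2 ⟨⟨w, hws⟩, ?_, by simp⟩))
    simpa [G', mem_neighborFinset] using ⟨hw, hwa⟩
  grw [card_le_card hpalette, card_union_le, card_union_le, card_singleton,
    card_image_le (s := G.neighborFinset u ∩ s)]

theorem sum_colorDegree_le_sum_colorDegree_deleteVertsAndColor (s : Finset V) (a : ℕ) :
    ∑ v, colorDegree G c v ≤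
      ∑ u, colorDegree (G.deleteVertsAndColor c s a) (c ∘ Sym2.map Subtype.val) u +
        2 * ∑ w ∈ s, G.degree w + Fintype.card {v // v ∉ s} := by
  set G' := G.deleteVertsAndColor c s a
  have hcompl (f : V → ℕ) : ∑ v ∈ sᶜ, f v = ∑ u : {v // v ∉ s}, f u := sum_subtype _ (by simp) f
  have hin : ∑ v ∈ s, colorDegree G c v ≤ ∑ w ∈ s, G.degree w :=
    sum_le_sum fun v _ ↦ colorDegree_le_degree G c v
  have hboundary : ∑ u : {v // v ∉ s}, #(G.neighborFinset u ∩ s) ≤ ∑ w ∈ s, G.degree w := by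
    rw [← hcompl fun v ↦ #(G.neighborFinset v ∩ s), ← G.sum_card_neighborFinset_inter s]
    exact sum_le_univ_sum_of_nonneg fun _ ↦ Nat.zero_le _
  have hout : ∑ u : {v // v ∉ s}, colorDegree G c u ≤
      ∑ u, colorDegree G' (c ∘ Sym2.map Subtype.val) u + ∑ w ∈ s, G.degree w +
        Fintype.card {v // v ∉ s} :=
    calc ∑ u : {v // v ∉ s}, colorDegree G c u
        ≤ ∑ u : {v // v ∉ s}, (colorDegree G' (c ∘ Sym2.map Subtype.val) u +
            #(G.neighborFinset u ∩ s) + 1) :=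
          sum_le_sum fun u _ ↦ colorDegree_le_colorDegree_deleteVertsAndColor s a u
      _ ≤ _ := by
          simp only [sum_add_distrib, sum_const, card_univ, smul_eq_mul, mul_one]
          omega
  rw [← sum_add_sum_compl s, hcompl]
  omega

end Deletion

theorem Sym2.notMem_of_forall_notMem {V : Type*} {M : Finset (Sym2 V)} {e : Sym2 V}
    (hdisj : ∀ f ∈ M, ∀ v ∈ e, v ∉ f) : e ∉ M := by
  intro heM
  induction e using Sym2.ind with
  | h x y => exact hdisj _ heM x (Sym2.mem_mk_left x y) (Sym2.mem_mk_left x y)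

namespace IsRainbowMatching

variable {V W : Type*} {G : SimpleGraph V} {c : Sym2 V → ℕ}

theorem empty : IsRainbowMatching G c ∅ := ⟨by simp, by simp, by simp⟩

theorem insert [DecidableEq V] {M : Finset (Sym2 V)} {e : Sym2 V}
    (hM : IsRainbowMatching G c M) (he : e ∈ G.edgeSet) (hdisj : ∀ f ∈ M, ∀ v ∈ e, v ∉ f)
    (hcol : ∀ f ∈ M, c f ≠ c e) : IsRainbowMatching G c (insert e M) := by
  obtain ⟨hE, hD, hC⟩ := hM
  refine ⟨?_, ?_, ?_⟩
  · simpa [Set.insert_subset_iff] using ⟨he, hE⟩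
  · simp only [mem_insert]
    rintro f (rfl | hf) g (rfl | hg) hfg v hv
    · exact absurd rfl hfg
    · exact hdisj g hg v hv
    · exact fun hvg ↦ hdisj f hf v hvg hv
    · exact hD f hf g hg hfg v hv
  · rw [coe_insert, Set.injOn_insert (Sym2.notMem_of_forall_notMem hdisj)]
    exact ⟨hC, fun ⟨f, hf, hcf⟩ ↦ hcol f hf hcf⟩

theorem image_map [DecidableEq V] {H : SimpleGraph W} {M : Finset (Sym2 W)} (f : H →g G)
    (hf : Function.Injective f) (hM : IsRainbowMatching H (c ∘ Sym2.map f) M) :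
    IsRainbowMatching G c (M.image (Sym2.map f)) := by
  obtain ⟨hE, hD, hC⟩ := hM
  refine ⟨?_, ?_, ?_⟩
  · intro _ hfe
    obtain ⟨e, he, rfl⟩ := mem_image.1 hfe
    exact f.map_mem_edgeSet (hE he)
  · simp only [mem_image]
    rintro _ ⟨e, he, rfl⟩ _ ⟨e', he', rfl⟩ hne v hv hv'
    obtain ⟨u, hu, rfl⟩ := Sym2.mem_map.1 hv
    obtain ⟨u', hu', huu'⟩ := Sym2.mem_map.1 hv'
    rw [hf huu'] at hu'
    exact hD e he e' he' (fun h ↦ hne (h ▸ rfl)) u hu hu'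
  · rw [coe_image]
    exact hC.image_of_comp

theorem exists_insert_of_deleteVertsAndColor [DecidableEq V] {s : Finset V} {e : Sym2 V}
    {M : Finset (Sym2 {v // v ∉ s})}
    (hM : IsRainbowMatching (G.deleteVertsAndColor c s (c e)) (c ∘ Sym2.map Subtype.val) M)
    (he : e ∈ G.edgeSet) (hes : ∀ v ∈ e, v ∈ s) :
    ∃ M' : Finset (Sym2 V), IsRainbowMatching G c M' ∧ #M' = #M + 1 := by
  have hdisj : ∀ f ∈ M.image (Sym2.map Subtype.val), ∀ v ∈ e, v ∉ f := by
    simp only [mem_image]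
    rintro _ ⟨f, -, rfl⟩ v hv hvf
    obtain ⟨u, -, rfl⟩ := Sym2.mem_map.1 hvf
    exact u.2 (hes _ hv)
  have hcol : ∀ f ∈ M.image (Sym2.map Subtype.val), c f ≠ c e := by
    simp only [mem_image]
    rintro _ ⟨f, hf, rfl⟩
    induction f using Sym2.ind with
    | h u w => simpa using (deleteVertsAndColor_adj.1 (hM.1 hf)).2
  refine ⟨Insert.insert e (M.image (Sym2.map Subtype.val)),
    (hM.image_map (deleteVertsAndColorHom s (c e)) Subtype.val_injective).insert he hdisj hcol, ?_⟩
  rw [card_insert_of_notMem (Sym2.notMem_of_forall_notMem hdisj),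
    card_image_of_injective _ (Sym2.map.injective Subtype.val_injective)]

end IsRainbowMatching

theorem NoFourCycle.exists_isRainbowMatching {V : Type*} [Fintype V] {G : SimpleGraph V}
    {c : Sym2 V → ℕ} (hG : NoFourCycle G) (k : ℕ) (hn : 0 < Fintype.card V)
    (hsum : 2 * (k + 1) * Fintype.card V ≤ ∑ v, colorDegree G c v) :
    ∃ M : Finset (Sym2 V), IsRainbowMatching G c M ∧ #M = k + 1 := by
  classical
  induction k generalizing V with
  | zero =>
    obtain ⟨v, -, hv⟩ := exists_ne_zero_of_sum_ne_zero (by omega : ∑ v, colorDegree G c v ≠ 0)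
    obtain ⟨w, hvw⟩ := G.degree_pos_iff_exists_adj v |>.1 <|
      (Nat.pos_of_ne_zero hv).trans_le (colorDegree_le_degree G c v)
    exact ⟨{s(v, w)}, IsRainbowMatching.empty.insert hvw (by simp) (by simp), rfl⟩
  | succ k ih =>
    have hD : 2 * (k + 2) * Fintype.card V ≤ ∑ v, G.degree v :=
      hsum.trans (sum_le_sum fun v _ ↦ colorDegree_le_degree G c v)
    obtain ⟨x, y, hxy, hlight⟩ := hG.exists_adj_two_mul_degree_add_le (by omega) hn hD
    obtain ⟨m, hm⟩ : ∃ m, Fintype.card V = m + 3 := by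
      have := hD.trans G.sum_degree_le_card_mul
      rw [mul_comm (Fintype.card V)] at this
      have := Nat.le_of_mul_le_mul_right this hn
      exact ⟨Fintype.card V - 3, by omega⟩
    set s : Finset V := {x, y}
    have hcard : Fintype.card {v // v ∉ s} = m + 1 := by
      rw [Fintype.card_subtype_compl, Fintype.card_coe, card_pair hxy.ne, hm]
      rfl
    have hreduce :=
      sum_colorDegree_le_sum_colorDegree_deleteVertsAndColor (G := G) (c := c) s (c s(x, y))
    rw [sum_pair hxy.ne, hcard] at hreduce
    rw [hm] at hsum hlight
    have hdense : 2 * (k + 1) * (m + 1) ≤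
        ∑ u, colorDegree (G.deleteVertsAndColor c s (c s(x, y))) (c ∘ Sym2.map Subtype.val) u := by
      nlinarith
    obtain ⟨M, hM, hMcard⟩ := ih (hG.of_hom (G.deleteVertsAndColorHom s _) Subtype.val_injective)
      (by omega) (by rwa [hcard])
    obtain ⟨M', hM', hM'card⟩ := hM.exists_insert_of_deleteVertsAndColor hxy (by simp [s])
    exact ⟨M', hM', by omega⟩

/-- Kritschgau: every `C₄`-free edge-colored graph with average color degree at least
`2k` contains a rainbow matching of size `k`. -/
theorem rainbow_matching_C4_free_avg_color_degree
    {V : Type*} [Fintype V] (k : ℕ) (hk : 1 ≤ k)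
    (G : SimpleGraph V) (c : Sym2 V → ℕ)
    (hC4 : ¬ ∃ a b d e : V, a ≠ b ∧ a ≠ d ∧ a ≠ e ∧ b ≠ d ∧ b ≠ e ∧ d ≠ e ∧
      G.Adj a b ∧ G.Adj b d ∧ G.Adj d e ∧ G.Adj e a)
    (havg : (2 * (k : ℚ)) ≤ (∑ v, (colorDegree G c v : ℚ)) / (Fintype.card V : ℚ)) :
    ∃ M : Finset (Sym2 V), IsRainbowMatching G c M ∧ M.card = k := by
  obtain ⟨k, rfl⟩ := Nat.exists_eq_add_of_le' hk
  have hn : 0 < Fintype.card V := by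
    refine Nat.pos_of_ne_zero fun h ↦ ?_
    rw [h, Nat.cast_zero, div_zero] at havg
    exact (by positivity : (0 : ℚ) < 2 * ((k + 1 : ℕ) : ℚ)).not_ge havg
  have hsum : 2 * (k + 1) * Fintype.card V ≤ ∑ v, colorDegree G c v := by
    exact_mod_cast (le_div_iff₀ (by exact_mod_cast hn)).1 havg
  exact NoFourCycle.exists_isRainbowMatching hC4 k hn hsum
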